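/- Let I be a finite set with involution, and suppose the FA-matrices 𝒩_{β,g} satisfy the monoid homomorphism property 𝒩_{β₁,g₁}·𝒩_{β₂,g₂} = 𝒩_{β₁+β₂,g₁+g₂} and the trace property Tr(𝒩_{β,g}) = N_{g+1}(β). Then 𝒩_{0,1} = ∑_{λ∈I} Tr(𝒩_{λ',0}) · 𝒩_{λ,0}. -/
import Mathlib


/-- The formal FA-matrix `𝒩_{β,g}` with entries `N_g(β + λᵢ + λⱼ')`. -/
def FAMatrix {l : ℕ} (N : ℕ → (Fin l → ℕ) → ℤ) (inv : Fin l → Fin l)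
    (β : Fin l → ℕ) (g : ℕ) : Matrix (Fin l) (Fin l) ℤ :=
  fun i j => N g (β + Pi.single i 1 + Pi.single (inv j) 1)

/-- If the FA-matrices satisfy the monoid homomorphism and trace properties,
then `𝒩_{0,1} = ∑_{λ∈I} Tr(𝒩_{λ',0}) • 𝒩_{λ,0}`. -/
theorem stmt_5 {l : ℕ} (N : ℕ → (Fin l → ℕ) → ℤ)
    (inv : Fin l → Fin l) (hinv : Function.Involutive inv)
    (hhom : ∀ (β₁ β₂ : Fin l → ℕ) (g₁ g₂ : ℕ),
      FAMatrix N inv β₁ g₁ * FAMatrix N inv β₂ g₂ =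
        FAMatrix N inv (β₁ + β₂) (g₁ + g₂))
    (htr : ∀ (β : Fin l → ℕ) (g : ℕ),
      Matrix.trace (FAMatrix N inv β g) = N (g + 1) β) :
    FAMatrix N inv 0 1 =
      ∑ lam : Fin l,
        (Matrix.trace (FAMatrix N inv (Pi.single (inv lam) 1) 0)) •
          FAMatrix N inv (Pi.single lam 1) 0 := by
  have htr0 : ∀ β : Fin l → ℕ,
      N 1 β = ∑ k : Fin l, N 0 (β + Pi.single k 1 + Pi.single (inv k) 1) := by
    intro β
    rw [← htr β 0]
    simp [Matrix.trace, Matrix.diag, FAMatrix]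
  ext i j
  have hh : ∀ k : Fin l,
      ∑ lam : Fin l,
        N 0 (Pi.single (inv k) 1 + Pi.single k 1 + Pi.single (inv lam) 1) *
          N 0 (Pi.single i 1 + Pi.single lam 1 + Pi.single (inv j) 1) =
        N 0 (Pi.single (inv k) 1 + Pi.single i 1 + Pi.single k 1 + Pi.single (inv j) 1) := by
    intro k
    have := congrFun (congrFun (hhom (Pi.single (inv k) 1) (Pi.single i 1) 0 0) k) j
    simpa [Matrix.mul_apply, FAMatrix] using this
  simp only [Matrix.sum_apply, Matrix.smul_apply, FAMatrix, smul_eq_mul,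
    Matrix.trace, Matrix.diag, Finset.sum_mul]
  rw [Finset.sum_comm]
  rw [htr0]
  refine Finset.sum_congr rfl fun k _ => ?_
  rw [show ∀ x y : Fin l → ℕ, (0 : Fin l → ℕ) + x + y = x + y from fun x y => by
    simp]
  have h2 := hh k
  calc N 0 (Pi.single i 1 + Pi.single (inv j) 1 + Pi.single k 1 + Pi.single (inv k) 1)
      = N 0 (Pi.single (inv k) 1 + Pi.single i 1 + Pi.single k 1 + Pi.single (inv j) 1) := by
        congr 1; abel
    _ = ∑ lam : Fin l,
        N 0 (Pi.single (inv k) 1 + Pi.single k 1 + Pi.single (inv lam) 1) *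
          N 0 (Pi.single i 1 + Pi.single lam 1 + Pi.single (inv j) 1) := h2.symm
    _ = ∑ lam : Fin l,
        N 0 (Pi.single (inv lam) 1 + Pi.single k 1 + Pi.single (inv k) 1) *
          N 0 (Pi.single lam 1 + Pi.single i 1 + Pi.single (inv j) 1) := by
        refine Finset.sum_congr rfl fun lam _ => ?_
        congr 1 <;> · congr 1; abel
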